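/- Let X be a separable Hilbert space, let Φ₀, Φ₁ be Borel probability measures on X × X with finite second moments, and for s, t ∈ ℝ let exp^s(x,v) := x + sv. Define f(s,t) := (1/2) W₂²(exp^s_♯Φ₀, exp^t_♯Φ₁) and φ² := ∫|v|²dΦ₀ + ∫|v|²dΦ₁. Then the function (s,t) ↦ f(s,t) - (φ²/2)(s² + t²) is concave on ℝ². -/

import Mathlib

open MeasureTheory Filter Topology
open scoped RealInnerProductSpace ENNReal

noncomputable section

/-- `γ` is a coupling of `μ` and `ν` if its marginals are `μ` and `ν`. -/
def IsCoupling {α β : Type*} [MeasurableSpace α] [MeasurableSpace β]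
    (γ : MeasureTheory.Measure (α × β)) (μ : MeasureTheory.Measure α)
    (ν : MeasureTheory.Measure β) : Prop :=
  γ.map Prod.fst = μ ∧ γ.map Prod.snd = ν

variable {X : Type*} [NormedAddCommGroup X] [InnerProductSpace ℝ X]
  [MeasurableSpace X] [BorelSpace X]

/-- The squared 2-Wasserstein distance, as the infimum of transport costs over couplings. -/
def W2sq (μ ν : Measure X) : ℝ :=
  sInf {c : ℝ | ∃ γ : Measure (X × X), IsProbabilityMeasure γ ∧ IsCoupling γ μ ν ∧
    c = ∫ p, ‖p.1 - p.2‖ ^ 2 ∂γ}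

/-- The 2-Wasserstein distance. -/
def W2 (μ ν : Measure X) : ℝ := Real.sqrt (W2sq μ ν)

/-- The exponential map `exp^t(x,v) = x + t v` on the tangent bundle `X × X`. -/
def expMap (t : ℝ) : X × X → X := fun p => p.1 + t • p.2

/-- A measure has finite second moment if `‖x‖²` is integrable. -/
def FiniteSecondMoment (μ : Measure X) : Prop := Integrable (fun x => ‖x‖ ^ 2) μ


/-!
For a fixed plan `Θ` between `Φ₀` and `Φ₁`, the cost `∫ ‖exp^s p - exp^t r‖² dΘ(p, r)` is a
quadratic polynomial in `(s, t)`. The Hilbertian identity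
`‖(1-α)a + αb‖² = (1-α)‖a‖² + α‖b‖² - α(1-α)‖a-b‖²` and Cauchy–Schwarz bound its second-order
part by `φ² (s² + t²)`, so the cost minus `φ² (s² + t²)` is concave in `(s, t)`. Each such cost
bounds `W₂²(exp^s♯Φ₀, exp^t♯Φ₁)` from above, and conversely a nearly optimal plan between the
pushforwards lifts, by disintegrating `Φ₀` along `exp^s` and `Φ₁` along `exp^t`, to a plan `Θ`.
So the function is a pointwise infimum of concave functions.
-/

open ProbabilityTheory

section Concavity

variable {E : Type*} [AddCommGroup E] [Module ℝ E] {s : Set E}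

theorem concaveOn_of_le_of_exists_lt_add {ι : Type*} {F : E → ℝ} {G : ι → E → ℝ}
    (hs : Convex ℝ s) (hG : ∀ i, ConcaveOn ℝ s (G i)) (hle : ∀ i, ∀ x ∈ s, F x ≤ G i x)
    (hlt : ∀ x ∈ s, ∀ ε > 0, ∃ i, G i x < F x + ε) : ConcaveOn ℝ s F := by
  refine ⟨hs, fun x hx y hy a b ha hb hab => le_of_forall_pos_le_add fun ε hε => ?_⟩
  obtain ⟨i, hi⟩ := hlt _ (hs hx hy ha hb hab) ε hε
  calc a • F x + b • F y ≤ a • G i x + b • G i y := by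
        gcongr
        exacts [hle i x hx, hle i y hy]
    _ ≤ G i (a • x + b • y) := (hG i).2 hx hy ha hb hab
    _ ≤ F (a • x + b • y) + ε := hi.le

theorem concaveOn_integral {Ω : Type*} [MeasurableSpace Ω] {μ : Measure Ω} {g : Ω → E → ℝ}
    (hs : Convex ℝ s) (hg : ∀ᵐ ω ∂μ, ConcaveOn ℝ s (g ω))
    (hint : ∀ x ∈ s, Integrable (fun ω => g ω x) μ) :
    ConcaveOn ℝ s fun x => ∫ ω, g ω x ∂μ := by
  refine ⟨hs, fun x hx y hy a b ha hb hab => ?_⟩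
  simp only [smul_eq_mul, ← integral_const_mul]
  rw [← integral_add ((hint x hx).const_mul a) ((hint y hy).const_mul b)]
  refine integral_mono_ae (((hint x hx).const_mul a).add ((hint y hy).const_mul b))
    (hint _ (hs hx hy ha hb hab)) ?_
  filter_upwards [hg] with ω hω
  exact hω.2 hx hy ha hb hab

end Concavity

section Hilbert

variable {E : Type*} [NormedAddCommGroup E] [InnerProductSpace ℝ E]

theorem norm_smul_add_smul_sq_of_add_eq_one (x y : E) {a b : ℝ} (hab : a + b = 1) :
    ‖a • x + b • y‖ ^ 2 = a * ‖x‖ ^ 2 + b * ‖y‖ ^ 2 - a * b * ‖x - y‖ ^ 2 := by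
  obtain rfl : b = 1 - a := by linarith
  rw [norm_add_sq_real, norm_sub_sq_real, norm_smul, norm_smul, real_inner_smul_left,
    real_inner_smul_right, Real.norm_eq_abs, Real.norm_eq_abs, mul_pow, mul_pow, sq_abs, sq_abs]
  ring

theorem norm_smul_sub_smul_sq_le (c d : ℝ) (v w : E) :
    ‖c • v - d • w‖ ^ 2 ≤ (c ^ 2 + d ^ 2) * (‖v‖ ^ 2 + ‖w‖ ^ 2) := by
  have h : ‖c • v - d • w‖ ≤ |c| * ‖v‖ + |d| * ‖w‖ := by
    refine (norm_sub_le _ _).trans ?_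
    rw [norm_smul, norm_smul, Real.norm_eq_abs, Real.norm_eq_abs]
  have h2 := pow_le_pow_left₀ (norm_nonneg _) h 2
  nlinarith [sq_abs c, sq_abs d, sq_nonneg (|c| * ‖w‖ - |d| * ‖v‖)]

theorem concaveOn_norm_expMap_sub_expMap_sq_sub (p r : E × E) :
    ConcaveOn ℝ Set.univ fun q : ℝ × ℝ =>
      ‖expMap q.1 p - expMap q.2 r‖ ^ 2 - (‖p.2‖ ^ 2 + ‖r.2‖ ^ 2) * (q.1 ^ 2 + q.2 ^ 2) := by
  refine ⟨convex_univ, ?_⟩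
  rintro ⟨s₀, t₀⟩ - ⟨s₁, t₁⟩ - a b ha hb hab
  simp only [Prod.smul_mk, Prod.mk_add_mk, smul_eq_mul]
  have hmid : expMap (a * s₀ + b * s₁) p - expMap (a * t₀ + b * t₁) r =
      a • (expMap s₀ p - expMap t₀ r) + b • (expMap s₁ p - expMap t₁ r) := by
    obtain rfl : b = 1 - a := by linarith
    simp only [expMap]
    module
  have hdiff : (expMap s₀ p - expMap t₀ r) - (expMap s₁ p - expMap t₁ r) =
      (s₀ - s₁) • p.2 - (t₀ - t₁) • r.2 := by
    simp only [expMap]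
    module
  have hdefect := mul_le_mul_of_nonneg_left
    (norm_smul_sub_smul_sq_le (s₀ - s₁) (t₀ - t₁) p.2 r.2) (mul_nonneg ha hb)
  rw [hmid, norm_smul_add_smul_sq_of_add_eq_one _ _ hab, hdiff]
  obtain rfl : b = 1 - a := by linarith
  linear_combination hdefect

end Hilbert

section Coupling

variable {α β α' β' : Type*} [MeasurableSpace α] [MeasurableSpace β] [MeasurableSpace α']
  [MeasurableSpace β'] {μ : Measure α} {ν : Measure β}

theorem IsCoupling.isProbabilityMeasure {γ : Measure (α × β)} (h : IsCoupling γ μ ν)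
    [IsProbabilityMeasure μ] : IsProbabilityMeasure γ :=
  ⟨by rw [← Set.preimage_univ (f := Prod.fst), ← Measure.map_apply measurable_fst .univ, h.1,
    measure_univ]⟩

theorem IsCoupling.map_prodMap {γ : Measure (α × β)} (h : IsCoupling γ μ ν) {f : α → α'}
    {g : β → β'} (hf : Measurable f) (hg : Measurable g) :
    IsCoupling (γ.map (Prod.map f g)) (μ.map f) (ν.map g) := by
  obtain ⟨rfl, rfl⟩ := h
  constructor <;>
  · rw [Measure.map_map (by fun_prop) (hf.prodMap hg), Measure.map_map (by fun_prop) (by fun_prop)]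
    rfl

theorem IsCoupling.integral_add_comp {γ : Measure (α × β)} (h : IsCoupling γ μ ν) {f : α → ℝ}
    {g : β → ℝ} (hf : Integrable f μ) (hg : Integrable g ν) :
    ∫ z, f z.1 + g z.2 ∂γ = ∫ x, f x ∂μ + ∫ y, g y ∂ν := by
  obtain ⟨rfl, rfl⟩ := h
  rw [integral_map measurable_fst.aemeasurable hf.1, integral_map measurable_snd.aemeasurable hg.1]
  exact integral_add (hf.comp_measurable measurable_fst) (hg.comp_measurable measurable_snd)

theorem IsCoupling.memLp_id {E F : Type*} [NormedAddCommGroup E] [NormedAddCommGroup F]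
    [MeasurableSpace E] [MeasurableSpace F] {μ : Measure E} {ν : Measure F}
    {γ : Measure (E × F)} (h : IsCoupling γ μ ν) {p : ℝ≥0∞} (hμ : MemLp id p μ)
    (hν : MemLp id p ν) : MemLp id p γ := by
  obtain ⟨rfl, rfl⟩ := h
  exact MemLp.of_fst_snd ⟨(memLp_map_measure_iff hμ.1 measurable_fst.aemeasurable).1 hμ,
    (memLp_map_measure_iff hν.1 measurable_snd.aemeasurable).1 hν⟩

theorem memLp_two_id_of_integrable_norm_sq {E F : Type*} [NormedAddCommGroup E]
    [NormedAddCommGroup F] [MeasurableSpace E] [MeasurableSpace F] [BorelSpace E] [BorelSpace F]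
    [SecondCountableTopology E] [SecondCountableTopology F] {μ : Measure (E × F)}
    (h : Integrable (fun p : E × F => ‖p.1‖ ^ 2 + ‖p.2‖ ^ 2) μ) : MemLp id 2 μ := by
  refine (memLp_two_iff_integrable_sq_norm aestronglyMeasurable_id).2 (h.mono' (by fun_prop) ?_)
  refine ae_of_all _ fun p => ?_
  rw [Real.norm_eq_abs, abs_of_nonneg (by positivity), id, Prod.norm_def]
  rcases le_total ‖p.1‖ ‖p.2‖ with hle | hle
  · rw [max_eq_right hle]; nlinarith [sq_nonneg ‖p.1‖]
  · rw [max_eq_left hle]; nlinarith [sq_nonneg ‖p.2‖]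

theorem MeasureTheory.Measure.comp_comap {γ : Type*} [MeasurableSpace γ] (μ : Measure α)
    (κ : Kernel β γ) {g : α → β} (hg : Measurable g) : κ.comap g hg ∘ₘ μ = κ ∘ₘ μ.map g := by
  rw [← Kernel.comp_deterministic_eq_comap, ← Measure.comp_assoc,
    Measure.deterministic_comp_eq_map]

theorem ProbabilityTheory.Kernel.map_fst_parallelComp (κ : Kernel α α') [IsSFiniteKernel κ]
    (η : Kernel β β') [IsMarkovKernel η] :
    (κ ∥ₖ η).map Prod.fst = κ.comap Prod.fst measurable_fst := by
  ext z : 1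
  rw [map_apply _ measurable_fst, parallelComp_apply, Measure.map_fst_prod, measure_univ,
    one_smul, comap_apply]

theorem ProbabilityTheory.Kernel.map_snd_parallelComp (κ : Kernel α α') [IsMarkovKernel κ]
    (η : Kernel β β') [IsSFiniteKernel η] :
    (κ ∥ₖ η).map Prod.snd = η.comap Prod.snd measurable_snd := by
  ext z : 1
  rw [map_apply _ measurable_snd, parallelComp_apply, Measure.map_snd_prod, measure_univ,
    one_smul, comap_apply]

variable [StandardBorelSpace α] [Nonempty α] [StandardBorelSpace α'] [Nonempty α']
  [StandardBorelSpace β] [Nonempty β] [StandardBorelSpace β'] [Nonempty β']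

theorem ProbabilityTheory.condDistrib_id_map_ae_eq_id (μ : Measure α) [IsFiniteMeasure μ]
    {f : α → α'} (hf : Measurable f) : (condDistrib id f μ).map f =ᵐ[μ.map f] Kernel.id :=
  (condDistrib_comp f aemeasurable_id hf).symm.trans (condDistrib_self f)

/-- Gluing lemma: `Θ` draws `(x', y')` from `γ`, then `x` and `y` independently from the
conditional laws of `μ` given `f = x'` and of `ν` given `g = y'`. -/
theorem exists_isCoupling_map_prodMap_eq [IsFiniteMeasure μ] [IsFiniteMeasure ν] {f : α → α'}
    {g : β → β'} (hf : Measurable f) (hg : Measurable g) {γ : Measure (α' × β')}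
    (hγ : IsCoupling γ (μ.map f) (ν.map g)) :
    ∃ Θ : Measure (α × β), IsCoupling Θ μ ν ∧ Θ.map (Prod.map f g) = γ := by
  set κ := condDistrib id f μ
  set η := condDistrib id g ν
  refine ⟨(κ ∥ₖ η) ∘ₘ γ, ⟨?_, ?_⟩, ?_⟩
  · rw [Measure.map_comp _ _ measurable_fst, Kernel.map_fst_parallelComp, Measure.comp_comap,
      hγ.1]
    simpa using condDistrib_comp_map hf.aemeasurable aemeasurable_id
  · rw [Measure.map_comp _ _ measurable_snd, Kernel.map_snd_parallelComp, Measure.comp_comap,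
      hγ.2]
    simpa using condDistrib_comp_map hg.aemeasurable aemeasurable_id
  · have hκ := condDistrib_id_map_ae_eq_id μ hf
    have hη := condDistrib_id_map_ae_eq_id ν hg
    rw [← hγ.1] at hκ
    rw [← hγ.2] at hη
    rw [Measure.map_comp _ _ (hf.prodMap hg)]
    conv_rhs => rw [← Measure.id_comp (μ := γ)]
    refine Measure.comp_congr ?_
    filter_upwards [ae_of_ae_map measurable_fst.aemeasurable hκ,
      ae_of_ae_map measurable_snd.aemeasurable hη] with z hz₁ hz₂
    rw [Kernel.map_apply _ hf] at hz₁
    rw [Kernel.map_apply _ hg] at hz₂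
    rw [Kernel.map_apply _ (hf.prodMap hg), Kernel.parallelComp_apply,
      ← Measure.map_prod_map _ _ hf hg, hz₁, hz₂]
    simp_rw [Kernel.id_apply, Measure.dirac_prod_dirac]

end Coupling

section Wasserstein

variable {E : Type*} [NormedAddCommGroup E] [MeasurableSpace E]

theorem W2sq_le_integral {μ ν : Measure E} [IsProbabilityMeasure μ] {γ : Measure (E × E)}
    (hγ : IsCoupling γ μ ν) : W2sq μ ν ≤ ∫ p, ‖p.1 - p.2‖ ^ 2 ∂γ :=
  csInf_le ⟨0, by rintro _ ⟨γ, -, -, rfl⟩; positivity⟩ ⟨γ, hγ.isProbabilityMeasure, hγ, rfl⟩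

theorem exists_isCoupling_integral_lt_W2sq_add (μ ν : Measure E) [IsProbabilityMeasure μ]
    [IsProbabilityMeasure ν] {ε : ℝ} (hε : 0 < ε) :
    ∃ γ : Measure (E × E), IsCoupling γ μ ν ∧ ∫ p, ‖p.1 - p.2‖ ^ 2 ∂γ < W2sq μ ν + ε := by
  have hlt : W2sq μ ν < W2sq μ ν + ε := lt_add_of_pos_right _ hε
  unfold W2sq at hlt ⊢
  obtain ⟨_, ⟨γ, -, hγ, rfl⟩, hlt⟩ := exists_lt_of_csInf_lt
    (by exact ⟨_, μ.prod ν, inferInstance, ⟨Measure.fst_prod, Measure.snd_prod⟩, rfl⟩) hlt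
  exact ⟨γ, hγ, hlt⟩

end Wasserstein

section ExpMap

variable {E : Type*} [NormedAddCommGroup E] [InnerProductSpace ℝ E] [MeasurableSpace E]

def expCost (Θ : Measure ((E × E) × (E × E))) (q : ℝ × ℝ) : ℝ :=
  ∫ z, ‖expMap q.1 z.1 - expMap q.2 z.2‖ ^ 2 ∂Θ

theorem IsCoupling.concaveOn_expCost_sub {Φ₀ Φ₁ : Measure (E × E)}
    {Θ : Measure ((E × E) × (E × E))} (hΘ : IsCoupling Θ Φ₀ Φ₁) (h₀ : MemLp id 2 Φ₀)
    (h₁ : MemLp id 2 Φ₁) :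
    ConcaveOn ℝ Set.univ fun q : ℝ × ℝ => expCost Θ q -
      (∫ p, ‖p.2‖ ^ 2 ∂Φ₀ + ∫ p, ‖p.2‖ ^ 2 ∂Φ₁) * (q.1 ^ 2 + q.2 ^ 2) := by
  have hΘ₂ : MemLp id 2 Θ := hΘ.memLp_id h₀ h₁
  have h₁' : MemLp (fun z : (E × E) × (E × E) => z.1) 2 Θ := hΘ₂.fst
  have h₂' : MemLp (fun z : (E × E) × (E × E) => z.2) 2 Θ := hΘ₂.snd
  have hcost (q : ℝ × ℝ) :
      MemLp (fun z : (E × E) × (E × E) => expMap q.1 z.1 - expMap q.2 z.2) 2 Θ :=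
    (h₁'.fst.add (h₁'.snd.const_smul q.1)).sub (h₂'.fst.add (h₂'.snd.const_smul q.2))
  have hv : Integrable (fun z : (E × E) × (E × E) => ‖z.1.2‖ ^ 2 + ‖z.2.2‖ ^ 2) Θ :=
    (h₁'.snd.integrable_norm_pow two_ne_zero).add (h₂'.snd.integrable_norm_pow two_ne_zero)
  have hv₀ : Integrable (fun p : E × E => ‖p.2‖ ^ 2) Φ₀ := h₀.snd.integrable_norm_pow two_ne_zero
  have hv₁ : Integrable (fun p : E × E => ‖p.2‖ ^ 2) Φ₁ := h₁.snd.integrable_norm_pow two_ne_zero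
  rw [← hΘ.integral_add_comp hv₀ hv₁]
  have hconc := concaveOn_integral (μ := Θ) convex_univ
    (ae_of_all _ fun z => concaveOn_norm_expMap_sub_expMap_sq_sub z.1 z.2)
    fun q _ => ((hcost q).integrable_norm_pow two_ne_zero).sub (hv.mul_const _)
  refine hconc.congr fun q _ => ?_
  dsimp only
  rw [integral_sub ((hcost q).integrable_norm_pow two_ne_zero) (hv.mul_const _),
    integral_mul_const, expCost]

variable [BorelSpace E] [SecondCountableTopology E]

theorem measurable_expMap (t : ℝ) : Measurable (expMap (X := E) t) := by
  unfold expMap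
  fun_prop

theorem integral_map_prodMap_expMap (Θ : Measure ((E × E) × (E × E))) (q : ℝ × ℝ) :
    ∫ p, ‖p.1 - p.2‖ ^ 2 ∂(Θ.map (Prod.map (expMap q.1) (expMap q.2))) = expCost Θ q :=
  integral_map ((measurable_expMap _).prodMap (measurable_expMap _)).aemeasurable (by fun_prop)

theorem W2sq_map_expMap_le_expCost {Φ₀ Φ₁ : Measure (E × E)} [IsProbabilityMeasure Φ₀]
    {Θ : Measure ((E × E) × (E × E))} (hΘ : IsCoupling Θ Φ₀ Φ₁) (q : ℝ × ℝ) :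
    W2sq (Φ₀.map (expMap q.1)) (Φ₁.map (expMap q.2)) ≤ expCost Θ q := by
  have := Measure.isProbabilityMeasure_map (μ := Φ₀) (measurable_expMap q.1).aemeasurable
  rw [← integral_map_prodMap_expMap]
  exact W2sq_le_integral (hΘ.map_prodMap (measurable_expMap _) (measurable_expMap _))

theorem exists_isCoupling_expCost_lt [CompleteSpace E] (Φ₀ Φ₁ : Measure (E × E))
    [IsProbabilityMeasure Φ₀] [IsProbabilityMeasure Φ₁] (q : ℝ × ℝ) {ε : ℝ} (hε : 0 < ε) :
    ∃ Θ, IsCoupling Θ Φ₀ Φ₁ ∧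
      expCost Θ q < W2sq (Φ₀.map (expMap q.1)) (Φ₁.map (expMap q.2)) + ε := by
  have := Measure.isProbabilityMeasure_map (μ := Φ₀) (measurable_expMap q.1).aemeasurable
  have := Measure.isProbabilityMeasure_map (μ := Φ₁) (measurable_expMap q.2).aemeasurable
  have : Nonempty E := ⟨0⟩
  obtain ⟨γ, hγ, hlt⟩ :=
    exists_isCoupling_integral_lt_W2sq_add (Φ₀.map (expMap q.1)) (Φ₁.map (expMap q.2)) hε
  obtain ⟨Θ, hΘ, rfl⟩ :=
    exists_isCoupling_map_prodMap_eq (measurable_expMap q.1) (measurable_expMap q.2) hγ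
  exact ⟨Θ, hΘ, by rwa [← integral_map_prodMap_expMap]⟩

end ExpMap

/-- Semiconcavity of the squared Wasserstein distance along exponential deformations:
`(s,t) ↦ (1/2)W₂²(exp^s_♯Φ₀, exp^t_♯Φ₁) - (φ²/2)(s² + t²)` is concave on `ℝ²`, where
`φ² = |Φ₀|₂² + |Φ₁|₂²`. -/
theorem semiconcavity_W2sq_expMap
    [CompleteSpace X] [SecondCountableTopology X]
    (Φ₀ Φ₁ : Measure (X × X))
    (h0 : IsProbabilityMeasure Φ₀) (h1 : IsProbabilityMeasure Φ₁)
    (hi0 : Integrable (fun p : X × X => ‖p.1‖ ^ 2 + ‖p.2‖ ^ 2) Φ₀)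
    (hi1 : Integrable (fun p : X × X => ‖p.1‖ ^ 2 + ‖p.2‖ ^ 2) Φ₁) :
    ConcaveOn ℝ Set.univ (fun q : ℝ × ℝ =>
      (1 / 2) * W2sq (Φ₀.map (expMap q.1)) (Φ₁.map (expMap q.2)) -
        ((∫ p, ‖p.2‖ ^ 2 ∂Φ₀ + ∫ p, ‖p.2‖ ^ 2 ∂Φ₁) / 2) * (q.1 ^ 2 + q.2 ^ 2)) := by
  refine concaveOn_of_le_of_exists_lt_add (ι := {Θ // IsCoupling Θ Φ₀ Φ₁})
    (G := fun Θ q => (1 / 2) * (expCost Θ.1 q -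
      (∫ p, ‖p.2‖ ^ 2 ∂Φ₀ + ∫ p, ‖p.2‖ ^ 2 ∂Φ₁) * (q.1 ^ 2 + q.2 ^ 2)))
    convex_univ (fun Θ => ?_) (fun Θ q _ => ?_) (fun q _ ε hε => ?_)
  · exact (Θ.2.concaveOn_expCost_sub (memLp_two_id_of_integrable_norm_sq hi0)
      (memLp_two_id_of_integrable_norm_sq hi1)).smul (by norm_num)
  · linarith [W2sq_map_expMap_le_expCost Θ.2 q]
  · obtain ⟨Θ, hΘ, hlt⟩ := exists_isCoupling_expCost_lt Φ₀ Φ₁ q (by positivity : 0 < 2 * ε)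
    exact ⟨⟨Θ, hΘ⟩, by linarith⟩
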